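/- Dual Hochster formula: for b ∈ {0,1}^n, the multigraded Betti number β_{i,b} of the Alexander dual ideal I_{X^∨} vanishes unless b^c ∈ X, in which case β_{i,b}(I_{X^∨}) = dim_k H̃_{i-1}(lk(b^c, X); k). -/

import Mathlib

open Finset
open scoped Classical

/-- A (finite abstract) simplicial complex on vertex set `[n]`, modeled as a
set of finsets of `Fin n`. -/
abbrev SComplex (n : ℕ) := Set (Finset (Fin n))

/-- `X` is a simplicial complex: closed under taking subsets. -/
def IsSComplex {n : ℕ} (X : SComplex n) : Prop := ∀ F ∈ X, ∀ G ⊆ F, G ∈ X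

/-- Alexander dual complex `X^∨ = {F | Fᶜ ∉ X}`. -/
def dualC {n : ℕ} (X : SComplex n) : SComplex n := {F | Fᶜ ∉ X}

/-- Link of a face `F` in `X`. -/
def linkC {n : ℕ} (F : Finset (Fin n)) (X : SComplex n) : SComplex n :=
  {G | F ∪ G ∈ X ∧ F ∩ G = ∅}

/-- Star of a face `F` in `X`. -/
def starC {n : ℕ} (F : Finset (Fin n)) (X : SComplex n) : SComplex n :=
  {G | F ∪ G ∈ X}

/-- Full subcomplex of `X` on the vertex set `b`. -/
def restC {n : ℕ} (X : SComplex n) (b : Finset (Fin n)) : SComplex n :=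
  {F | F ∈ X ∧ F ⊆ b}

/-- Faces of `X` of cardinality `m` (so of dimension `m - 1`). -/
def Faces {n : ℕ} (X : SComplex n) (m : ℤ) : Type :=
  {F : Finset (Fin n) // F ∈ X ∧ (F.card : ℤ) = m}

instance {n : ℕ} (X : SComplex n) (m : ℤ) : Finite (Faces X m) :=
  Subtype.finite

/-- The simplicial boundary map on (reduced, oriented) chains with coefficients in `R`:
from chains in simplicial dimension `d` (faces of cardinality `d+1`) to chains in
dimension `d-1`.  `(∂ f) G = ∑_v ± f (insert v G)`. -/
noncomputable def chainBd (R : Type) [CommRing R] {n : ℕ} (X : SComplex n) (d : ℤ) :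
    (Faces X (d + 1) → R) →ₗ[R] (Faces X d → R) where
  toFun f G := ∑ v : Fin n,
    if h : v ∉ G.1 ∧ insert v G.1 ∈ X then
      ((-1 : R) ^ (G.1.filter (· < v)).card) *
        f ⟨insert v G.1, h.2, by
          have := G.2.2
          rw [Finset.card_insert_of_notMem h.1]
          push_cast
          omega⟩
    else 0
  map_add' f g := by
    funext G
    rw [Pi.add_apply, ← Finset.sum_add_distrib]
    refine Finset.sum_congr rfl fun v _ => ?_
    split_ifs with h
    · exact mul_add _ _ _
    · exact (add_zero 0).symm
  map_smul' c f := by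
    funext G
    rw [Pi.smul_apply, smul_eq_mul, Finset.mul_sum]
    apply Finset.sum_congr rfl
    intro v _
    split_ifs with h
    · exact mul_left_comm _ _ _
    · simp

/-- The reduced simplicial homology of `X` in dimension `d`, with coefficients in `R`,
as a module: cycles modulo boundaries. -/
noncomputable def hredMod (R : Type) [CommRing R] {n : ℕ} (X : SComplex n) (d : ℤ) :=
  LinearMap.ker (chainBd R X d) ⧸
    Submodule.comap (LinearMap.ker (chainBd R X d)).subtype
      (LinearMap.range (chainBd R X (d + 1)))

/-- The dimension of the reduced simplicial homology `H̃_d(X; k)` over a field `k`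
(computed as `dim ker ∂_d - dim im ∂_{d+1}`). -/
noncomputable def hred (k : Type) [Field k] {n : ℕ} (X : SComplex n) (d : ℤ) : ℕ :=
  Module.finrank k (LinearMap.ker (chainBd k X d)) -
    Module.finrank k (LinearMap.range (chainBd k X (d + 1)))

/-- A monomial ideal in `k[x_1,…,x_n]`, encoded by its set of exponent vectors:
a set of exponent vectors closed under adding arbitrary exponent vectors. -/
def IsMonomialIdealExp {n : ℕ} (I : Set (Fin n → ℕ)) : Prop :=
  ∀ a ∈ I, ∀ c : Fin n → ℕ, a + c ∈ I

/-- Characteristic vector of a finset. -/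
def chi {n : ℕ} (F : Finset (Fin n)) : Fin n → ℕ := fun j => if j ∈ F then 1 else 0

/-- The simplicial complex `K_b(I) = {F | x^(b-F) ∈ I}` attached to a monomial
ideal (given by its exponent set `I`) and a degree `b ∈ ℕ^n`. -/
def Kb {n : ℕ} (I : Set (Fin n → ℕ)) (b : Fin n → ℕ) : SComplex n :=
  {F | (∀ j ∈ F, 1 ≤ b j) ∧ (fun j => b j - chi F j) ∈ I}

/-- Basis of the degree-`b` part of `I ⊗ Λ^m V` in the Koszul complex `I ⊗ K_•`:
squarefree vectors `F` of weight `m` with `F ≤ b` and `x^(b-F) ∈ I`. -/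
def KFaces {n : ℕ} (I : Set (Fin n → ℕ)) (b : Fin n → ℕ) (m : ℤ) : Type :=
  {F : Finset (Fin n) //
    (∀ j ∈ F, 1 ≤ b j) ∧ (fun j => b j - chi F j) ∈ I ∧ (F.card : ℤ) = m}

instance {n : ℕ} (I : Set (Fin n → ℕ)) (b : Fin n → ℕ) (m : ℤ) :
    Finite (KFaces I b m) := Subtype.finite

/-- The degree-`b` part of the Koszul differential `I ⊗ Λ^(m+1) V → I ⊗ Λ^m V`. -/
noncomputable def kosBd (k : Type) [Field k] {n : ℕ} (I : Set (Fin n → ℕ))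
    (b : Fin n → ℕ) (m : ℤ) : (KFaces I b (m + 1) → k) →ₗ[k] (KFaces I b m → k) where
  toFun f G := ∑ v : Fin n,
    if h : v ∉ G.1 ∧ (∀ j ∈ insert v G.1, 1 ≤ b j) ∧
        (fun j => b j - chi (insert v G.1) j) ∈ I then
      ((-1 : k) ^ (G.1.filter (· < v)).card) *
        f ⟨insert v G.1, h.2.1, h.2.2, by
          have := G.2.2.2
          rw [Finset.card_insert_of_notMem h.1]
          push_cast
          omega⟩
    else 0
  map_add' f g := by
    funext G
    rw [Pi.add_apply, ← Finset.sum_add_distrib]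
    refine Finset.sum_congr rfl fun v _ => ?_
    split_ifs with h
    · exact mul_add _ _ _
    · exact (add_zero 0).symm
  map_smul' c f := by
    funext G
    rw [Pi.smul_apply, smul_eq_mul, Finset.mul_sum]
    apply Finset.sum_congr rfl
    intro v _
    split_ifs with h
    · exact mul_left_comm _ _ _
    · simp

/-- The multigraded Betti number `β_{i,b}(I) = dim_k Tor_i^S(I,k)_b` of a monomial
ideal, computed from the degree-`b` strand of the Koszul complex `I ⊗ K_•`
(whose `i`-th homology is `Tor_i^S(I,k)`), as `dim ker ∂_i - dim im ∂_{i+1}`. -/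
noncomputable def bettiMono (k : Type) [Field k] {n : ℕ} (I : Set (Fin n → ℕ))
    (i : ℕ) (b : Fin n → ℕ) : ℕ :=
  Module.finrank k (LinearMap.ker (kosBd k I b ((i : ℤ) - 1))) -
    Module.finrank k (LinearMap.range (kosBd k I b (i : ℤ)))

/-- The Stanley–Reisner ideal `I_X`, encoded by its exponent set:
`x^a ∈ I_X` iff the support of `a` is not a face of `X`. -/
def SRIdealExp {n : ℕ} (X : SComplex n) : Set (Fin n → ℕ) :=
  {a | (Finset.univ.filter fun j => 1 ≤ a j) ∉ X}

/-- Multigraded Betti numbers `β_{i,b}(I_X)` of a Stanley–Reisner ideal, for a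
squarefree degree `b` given by a subset of the vertices. -/
noncomputable def bettiSR (k : Type) [Field k] {n : ℕ} (X : SComplex n)
    (i : ℕ) (b : Finset (Fin n)) : ℕ :=
  bettiMono k (SRIdealExp X) i (chi b)


namespace DH

lemma key {n : ℕ} (X : SComplex n) (b F : Finset (Fin n)) :
    ((∀ j ∈ F, 1 ≤ chi b j) ∧ (fun j => chi b j - chi F j) ∈ SRIdealExp (dualC X)) ↔
      F ∈ linkC bᶜ X := by
  have h1 : (∀ j ∈ F, 1 ≤ chi b j) ↔ bᶜ ∩ F = ∅ := by
    simp only [chi]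
    constructor
    · intro h
      ext j
      simp only [Finset.mem_inter, Finset.mem_compl, Finset.notMem_empty, iff_false]
      rintro ⟨hj, hjF⟩
      have := h j hjF
      simp [hj] at this
    · intro h j hj
      have : j ∈ b := by
        by_contra hb
        have : j ∈ bᶜ ∩ F := Finset.mem_inter.mpr ⟨Finset.mem_compl.mpr hb, hj⟩
        simp [h] at this
      simp [this]
  have h2 : (Finset.univ.filter fun j => 1 ≤ chi b j - chi F j) = b \ F := by
    ext j
    rw [Finset.mem_filter, Finset.mem_sdiff]; simp only [Finset.mem_univ, true_and, chi]
    by_cases hb : j ∈ b <;> by_cases hf : j ∈ F <;> simp [hb, hf]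
  have h3 : (b \ F)ᶜ = bᶜ ∪ F := by
    ext j; simp [Finset.mem_sdiff]; tauto
  simp only [SRIdealExp, dualC, Set.mem_setOf_eq, not_not, h2, h3, linkC, h1]
  tauto

lemma conj_finrank (k : Type) [Field k] {M1 M2 N1 N2 : Type}
    [AddCommGroup M1] [AddCommGroup M2] [AddCommGroup N1] [AddCommGroup N2]
    [Module k M1] [Module k M2] [Module k N1] [Module k N2]
    (f : M1 →ₗ[k] M2) (g : N1 →ₗ[k] N2) (e1 : N1 ≃ₗ[k] M1) (e2 : N2 ≃ₗ[k] M2)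
    (h : ∀ x, f (e1 x) = e2 (g x)) :
    Module.finrank k (LinearMap.ker f) = Module.finrank k (LinearMap.ker g) ∧
      Module.finrank k (LinearMap.range f) = Module.finrank k (LinearMap.range g) := by
  constructor
  · have hk : LinearMap.ker f = Submodule.map (e1 : N1 →ₗ[k] M1) (LinearMap.ker g) := by
      ext x
      simp only [LinearMap.mem_ker, Submodule.mem_map, LinearEquiv.coe_coe]
      constructor
      · intro hx
        refine ⟨e1.symm x, ?_, e1.apply_symm_apply x⟩
        have h' := h (e1.symm x)
        rw [e1.apply_symm_apply, hx] at h'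
        exact e2.injective (by simp [← h'])
      · rintro ⟨y, hy, rfl⟩
        rw [h y, hy, map_zero]
    rw [hk, LinearEquiv.finrank_map_eq]
  · have hr : LinearMap.range f = Submodule.map (e2 : N2 →ₗ[k] M2) (LinearMap.range g) := by
      ext x
      simp only [LinearMap.mem_range, Submodule.mem_map, LinearEquiv.coe_coe]
      constructor
      · rintro ⟨y, rfl⟩
        refine ⟨g (e1.symm y), ⟨e1.symm y, rfl⟩, ?_⟩
        rw [← h (e1.symm y), e1.apply_symm_apply]
      · rintro ⟨z, ⟨y, rfl⟩, rfl⟩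
        exact ⟨e1 y, h y⟩
    rw [hr, LinearEquiv.finrank_map_eq]

def facesEquiv {n : ℕ} (X : SComplex n) (b : Finset (Fin n)) (m : ℤ) :
    Faces (linkC bᶜ X) m ≃ KFaces (SRIdealExp (dualC X)) (chi b) m where
  toFun F := ⟨F.1, ((key X b F.1).mpr F.2.1).1, ((key X b F.1).mpr F.2.1).2, F.2.2⟩
  invFun F := ⟨F.1, (key X b F.1).mp ⟨F.2.1, F.2.2.1⟩, F.2.2.2⟩
  left_inv F := rfl
  right_inv F := rfl

lemma comm {n : ℕ} (k : Type) [Field k] (X : SComplex n) (b : Finset (Fin n)) (m : ℤ)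
    (x : Faces (linkC bᶜ X) (m + 1) → k) :
    kosBd k (SRIdealExp (dualC X)) (chi b) m
        (LinearEquiv.funCongrLeft k k (facesEquiv X b (m + 1)).symm x)
      = LinearEquiv.funCongrLeft k k (facesEquiv X b m).symm
          (chainBd k (linkC bᶜ X) m x) := by
  funext G
  simp only [kosBd, chainBd, LinearMap.coe_mk, AddHom.coe_mk,
    LinearEquiv.funCongrLeft_apply, LinearMap.funLeft_apply]
  refine Finset.sum_congr rfl fun v _ => ?_
  refine dite_congr ?_ (fun h => ?_) (fun h => rfl)
  · apply propext
    exact and_congr Iff.rfl (key X b (insert v G.1))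
  · rfl

end DH

/-- dual Hochster formula.  For `b ∈ {0,1}^n`, `β_{i,b}(I_{X^∨})`
vanishes unless `bᶜ ∈ X`, in which case it equals
`dim_k H̃_{i-1}(lk(bᶜ, X); k)`. -/
theorem dual_hochster_formula {n : ℕ} (k : Type) [Field k] (X : SComplex n)
    (hX : IsSComplex X) (i : ℕ) (b : Finset (Fin n)) :
    (bᶜ ∉ X → bettiSR k (dualC X) i b = 0) ∧
      (bᶜ ∈ X → bettiSR k (dualC X) i b = hred k (linkC bᶜ X) ((i : ℤ) - 1)) := by
  have main : bettiSR k (dualC X) i b = hred k (linkC bᶜ X) ((i : ℤ) - 1) := by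
    have h1 := DH.conj_finrank k (kosBd k (SRIdealExp (dualC X)) (chi b) ((i : ℤ) - 1))
      (chainBd k (linkC bᶜ X) ((i : ℤ) - 1))
      (LinearEquiv.funCongrLeft k k (DH.facesEquiv X b (((i : ℤ) - 1) + 1)).symm)
      (LinearEquiv.funCongrLeft k k (DH.facesEquiv X b ((i : ℤ) - 1)).symm)
      (DH.comm k X b ((i : ℤ) - 1))
    have h2 := DH.conj_finrank k (kosBd k (SRIdealExp (dualC X)) (chi b) (i : ℤ))
      (chainBd k (linkC bᶜ X) (i : ℤ))
      (LinearEquiv.funCongrLeft k k (DH.facesEquiv X b ((i : ℤ) + 1)).symm)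
      (LinearEquiv.funCongrLeft k k (DH.facesEquiv X b (i : ℤ)).symm)
      (DH.comm k X b (i : ℤ))
    unfold bettiSR bettiMono hred
    rw [h1.1, h2.2]
    exact congrArg
      (fun d : ℤ =>
        Module.finrank k (LinearMap.ker (chainBd k (linkC bᶜ X) ((i : ℤ) - 1))) -
          Module.finrank k (LinearMap.range (chainBd k (linkC bᶜ X) d)))
      (by ring : (i : ℤ) = ((i : ℤ) - 1) + 1)
  refine ⟨fun hb => ?_, fun _ => main⟩
  rw [main]
  have hempty : ∀ d : ℤ, IsEmpty (Faces (linkC bᶜ X) d) := by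
    intro d
    constructor
    rintro ⟨F, ⟨hF1, _⟩, _⟩
    exact hb (hX _ hF1 _ Finset.subset_union_left)
  have hsub : Subsingleton (Faces (linkC bᶜ X) (((i : ℤ) - 1) + 1) → k) :=
    ⟨fun f g => funext fun x => (hempty _).elim x⟩
  unfold hred
  haveI : Subsingleton (LinearMap.ker (chainBd k (linkC bᶜ X) ((i : ℤ) - 1))) :=
    ⟨fun a c => Subtype.ext (hsub.allEq a.1 c.1)⟩
  have : Module.finrank k (LinearMap.ker (chainBd k (linkC bᶜ X) ((i : ℤ) - 1))) = 0 :=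
    Module.finrank_zero_of_subsingleton
  omega
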